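/- arXiv:0911.3915 — 4 statements merged into one kernel-verified Lean document; each statement's English description precedes it below -/
import Mathlib

section
/- Let V be a finite-dimensional vector space over ℚ with a bilinear form Φ, and A, B, C subspaces on which Φ vanishes identically. Define W = (A ∩ (B + C)) / (A ∩ B + A ∩ C). For classes [a], [a'] ∈ W represented by a, a' ∈ A ∩ (B + C), writing a = -b - c and a' = -b' - c' with b, b' ∈ B and c, c' ∈ C, the assignment Ψ([a],[a']) := Φ(a, b') is a well-defined bilinear form on W, independent of the choices of representatives a, a' and of the decompositions into b, b', c, c'. -/
/-!
Choose linearly, for `y ∈ B ⊔ C`, a component `σ y ∈ B` with `y - σ y ∈ C`. Any two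
`B`-components of `y` differ by an element of `B ⊓ C`, and `B ⊓ C` is `Φ`-orthogonal to
`B ⊔ C` because `B` and `C` are isotropic; hence `-Φ x (σ y) = Φ x b'` for every decomposition
`y = -b' - c'`. Isotropy of `A`, `B` and `C` then makes the form `(x, y) ↦ -Φ x (σ y)` on
`A ⊓ (B ⊔ C)` vanish on `A ⊓ B ⊔ A ⊓ C` in each variable, so it descends to the quotient.
-/

namespace WallPairing

open Submodule

variable {R V M : Type*} [CommRing R] [AddCommGroup V] [Module R V] [AddCommGroup M] [Module R M]

theorem exists_linear_component (B C : Submodule R V) [Module.Projective R ↥(B ⊔ C)] :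
    ∃ σ : ↥(B ⊔ C) →ₗ[R] V, ∀ y, σ y ∈ B ∧ (y : V) - σ y ∈ C := by
  let add : ↥B × ↥C →ₗ[R] ↥(B ⊔ C) := (B.subtype.coprod C.subtype).codRestrict _
    fun p => add_mem (mem_sup_left p.1.2) (mem_sup_right p.2.2)
  have h_add : LinearMap.range add = ⊤ := by
    refine LinearMap.range_eq_top.mpr fun ⟨y, hy⟩ => ?_
    obtain ⟨b, hb, c, hc, rfl⟩ := mem_sup.mp hy
    exact ⟨(⟨b, hb⟩, ⟨c, hc⟩), rfl⟩
  obtain ⟨g, hg⟩ := add.exists_rightInverse_of_surjective h_add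
  refine ⟨B.subtype ∘ₗ LinearMap.fst R B C ∘ₗ g, fun y => ⟨(g y).1.2, ?_⟩⟩
  have hy : ((g y).1 : V) + (g y).2 = y := congr_arg Subtype.val (LinearMap.congr_fun hg y)
  simp [← hy]

variable (Φ : V →ₗ[R] V →ₗ[R] M) {A B C : Submodule R V}

theorem apply_eq_zero_of_mem_sup_of_mem_inf (hB : ∀ x ∈ B, ∀ y ∈ B, Φ x y = 0)
    (hC : ∀ x ∈ C, ∀ y ∈ C, Φ x y = 0) {x d : V} (hx : x ∈ B ⊔ C)
    (hd : d ∈ B ⊓ C) : Φ x d = 0 := by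
  obtain ⟨b, hb, c, hc, rfl⟩ := mem_sup.mp hx
  rw [map_add, LinearMap.add_apply, hB b hb d hd.1, hC c hc d hd.2, add_zero]

theorem apply_component_eq (hB : ∀ x ∈ B, ∀ y ∈ B, Φ x y = 0)
    (hC : ∀ x ∈ C, ∀ y ∈ C, Φ x y = 0) {σ : ↥(B ⊔ C) →ₗ[R] V}
    (hσ : ∀ y, σ y ∈ B ∧ (y : V) - σ y ∈ C) {x : V} (hx : x ∈ B ⊔ C)
    (y : ↥(B ⊔ C)) {b c : V} (hb : b ∈ B) (hc : c ∈ C) (hy : (y : V) = b + c) :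
    Φ x (σ y) = Φ x b := by
  have h_diff_eq : σ y - b = c - ((y : V) - σ y) := by rw [hy]; abel
  have h_diff : σ y - b ∈ B ⊓ C :=
    ⟨sub_mem (hσ y).1 hb, h_diff_eq ▸ sub_mem hc (hσ y).2⟩
  rw [← sub_eq_zero, ← map_sub, apply_eq_zero_of_mem_sup_of_mem_inf Φ hB hC hx h_diff]

variable (A B C) in
def prePairing (σ : ↥(B ⊔ C) →ₗ[R] V) :
    ↥(A ⊓ (B ⊔ C)) →ₗ[R] ↥(A ⊓ (B ⊔ C)) →ₗ[R] M :=
  -Φ.compl₁₂ (A ⊓ (B ⊔ C)).subtype (σ ∘ₗ inclusion inf_le_right)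

variable {σ : ↥(B ⊔ C) →ₗ[R] V}

theorem prePairing_apply (x y : ↥(A ⊓ (B ⊔ C))) :
    prePairing Φ A B C σ x y = -Φ x (σ (inclusion inf_le_right y)) := rfl

theorem prePairing_eq_of_eq_neg_sub (hB : ∀ x ∈ B, ∀ y ∈ B, Φ x y = 0)
    (hC : ∀ x ∈ C, ∀ y ∈ C, Φ x y = 0) (hσ : ∀ y, σ y ∈ B ∧ (y : V) - σ y ∈ C)
    (x y : ↥(A ⊓ (B ⊔ C))) {b c : V} (hb : b ∈ B) (hc : c ∈ C) (hy : (y : V) = -b - c) :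
    prePairing Φ A B C σ x y = Φ x b := by
  rw [prePairing_apply, apply_component_eq Φ hB hC hσ x.2.2 _ (neg_mem hb) (neg_mem hc)
    (by simpa [sub_eq_add_neg] using hy), map_neg, neg_neg]

theorem le_ker_flip_prePairing (hA : ∀ x ∈ A, ∀ y ∈ A, Φ x y = 0)
    (hB : ∀ x ∈ B, ∀ y ∈ B, Φ x y = 0) (hC : ∀ x ∈ C, ∀ y ∈ C, Φ x y = 0)
    (hσ : ∀ y, σ y ∈ B ∧ (y : V) - σ y ∈ C) :
    (A ⊓ B ⊔ A ⊓ C).comap (A ⊓ (B ⊔ C)).subtype ≤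
      (prePairing Φ A B C σ).flip.ker := by
  intro y hy
  obtain ⟨p, hp, q, hq, hpq : p + q = (y : V)⟩ := mem_sup.mp hy
  ext x
  rw [LinearMap.flip_apply, LinearMap.zero_apply,
    prePairing_eq_of_eq_neg_sub Φ hB hC hσ x y (neg_mem hp.2) (neg_mem hq.2)
      (by rw [← hpq]; abel),
    map_neg, hA x x.2.1 p hp.1, neg_zero]

theorem le_ker_prePairing (hA : ∀ x ∈ A, ∀ y ∈ A, Φ x y = 0)
    (hB : ∀ x ∈ B, ∀ y ∈ B, Φ x y = 0) (hC : ∀ x ∈ C, ∀ y ∈ C, Φ x y = 0)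
    (hσ : ∀ y, σ y ∈ B ∧ (y : V) - σ y ∈ C) :
    (A ⊓ B ⊔ A ⊓ C).comap (A ⊓ (B ⊔ C)).subtype ≤ (prePairing Φ A B C σ).ker := by
  intro x hx
  obtain ⟨p, hp, q, hq, hpq : p + q = (x : V)⟩ := mem_sup.mp hx
  ext y
  set z := inclusion inf_le_right y
  have hq_z : Φ q (σ z) = 0 := by
    rw [← sub_sub_cancel (y : V) (σ z), map_sub, hA q hq.1 y y.2.1,
      hC q hq.2 (y - σ z) (hσ z).2, sub_zero]
  rw [LinearMap.zero_apply, prePairing_apply, ← hpq, map_add, LinearMap.add_apply,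
    hB p hp.2 _ (hσ z).1, hq_z, add_zero, neg_zero]

end WallPairing

theorem wall_pairing_well_defined_general {V : Type} [AddCommGroup V] [Module ℚ V]
    (Φ : V →ₗ[ℚ] V →ₗ[ℚ] ℚ) (A B C : Submodule ℚ V)
    (hA : ∀ x ∈ A, ∀ y ∈ A, Φ x y = 0)
    (hB : ∀ x ∈ B, ∀ y ∈ B, Φ x y = 0)
    (hC : ∀ x ∈ C, ∀ y ∈ C, Φ x y = 0) :
    ∃ Ψ : (↥(A ⊓ (B ⊔ C)) ⧸ (Submodule.comap (A ⊓ (B ⊔ C)).subtype (A ⊓ B ⊔ A ⊓ C)))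
      →ₗ[ℚ] (↥(A ⊓ (B ⊔ C)) ⧸ (Submodule.comap (A ⊓ (B ⊔ C)).subtype (A ⊓ B ⊔ A ⊓ C)))
      →ₗ[ℚ] ℚ,
      ∀ (a a' b b' c c' : V) (_ : a ∈ A) (_ : a' ∈ A) (_ : b ∈ B) (_ : b' ∈ B)
        (_ : c ∈ C) (_ : c' ∈ C) (_ : a = -b - c) (_ : a' = -b' - c')
        (hma : a ∈ A ⊓ (B ⊔ C)) (hma' : a' ∈ A ⊓ (B ⊔ C)),
        Ψ (Submodule.Quotient.mk ⟨a, hma⟩) (Submodule.Quotient.mk ⟨a', hma'⟩) = Φ a b' := by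
  obtain ⟨σ, hσ⟩ := WallPairing.exists_linear_component B C
  refine ⟨(WallPairing.prePairing Φ A B C σ).liftQ₂ _ _
    (WallPairing.le_ker_prePairing Φ hA hB hC hσ)
    (WallPairing.le_ker_flip_prePairing Φ hA hB hC hσ), ?_⟩
  intro a a' b b' c c' _ _ _ hb' _ hc' _ ha' hma hma'
  exact WallPairing.prePairing_eq_of_eq_neg_sub Φ hB hC hσ ⟨a, hma⟩ ⟨a', hma'⟩ hb' hc' ha'

/-- Wall's pairing Ψ([a],[a']) = Φ(a,b') is a well-defined bilinear form on
W = (A ∩ (B + C)) / (A ∩ B + A ∩ C), independent of all choices of representatives and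
decompositions. -/
theorem wall_pairing_well_defined {V : Type} [AddCommGroup V] [Module ℚ V]
    [FiniteDimensional ℚ V]
    (Φ : V →ₗ[ℚ] V →ₗ[ℚ] ℚ) (A B C : Submodule ℚ V)
    (hA : ∀ x ∈ A, ∀ y ∈ A, Φ x y = 0)
    (hB : ∀ x ∈ B, ∀ y ∈ B, Φ x y = 0)
    (hC : ∀ x ∈ C, ∀ y ∈ C, Φ x y = 0) :
    ∃ Ψ : (↥(A ⊓ (B ⊔ C)) ⧸ (Submodule.comap (A ⊓ (B ⊔ C)).subtype (A ⊓ B ⊔ A ⊓ C)))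
      →ₗ[ℚ] (↥(A ⊓ (B ⊔ C)) ⧸ (Submodule.comap (A ⊓ (B ⊔ C)).subtype (A ⊓ B ⊔ A ⊓ C)))
      →ₗ[ℚ] ℚ,
      ∀ (a a' b b' c c' : V) (_ : a ∈ A) (_ : a' ∈ A) (_ : b ∈ B) (_ : b' ∈ B)
        (_ : c ∈ C) (_ : c' ∈ C) (_ : a = -b - c) (_ : a' = -b' - c')
        (hma : a ∈ A ⊓ (B ⊔ C)) (hma' : a' ∈ A ⊓ (B ⊔ C)),
        Ψ (Submodule.Quotient.mk ⟨a, hma⟩) (Submodule.Quotient.mk ⟨a', hma'⟩) = Φ a b' :=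
  wall_pairing_well_defined_general Φ A B C hA hB hC
end

section
/- With V, Φ, A, B, C and W = (A ∩ (B + C)) / (A ∩ B + A ∩ C) as above, if Φ is skew-symmetric then the induced Wall form Ψ on W (defined by Ψ([a],[a']) = Φ(a,b') where a' = -b' - c', b' ∈ B, c' ∈ C) is a symmetric bilinear form. -/
namespace LinearMap

variable {R M : Type*} [CommSemiring R] [AddCommMonoid M] [Module R M]

theorem apply_add_add_of_apply_eq_zero (Φ : M →ₗ[R] M →ₗ[R] R) {b b' c c' : M}
    (hbb : Φ b b' = 0) (hcc : Φ c c' = 0) :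
    Φ (b + c) (b' + c') = Φ b c' + Φ c b' := by
  simp only [map_add, add_apply, hbb, hcc, zero_add, add_comm]

end LinearMap

theorem wall_pairing_symmetric_general {V : Type} [AddCommGroup V] [Module ℚ V]
    (Φ : V →ₗ[ℚ] V →ₗ[ℚ] ℚ)
    (hskew : ∀ x y, Φ x y = -(Φ y x))
    (A B C : Submodule ℚ V)
    (hA : ∀ x ∈ A, ∀ y ∈ A, Φ x y = 0)
    (hB : ∀ x ∈ B, ∀ y ∈ B, Φ x y = 0)
    (hC : ∀ x ∈ C, ∀ y ∈ C, Φ x y = 0)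
    (a a' b b' c c' : V)
    (ha : a ∈ A) (ha' : a' ∈ A) (hb : b ∈ B) (hb' : b' ∈ B) (hc : c ∈ C) (hc' : c' ∈ C)
    (h1 : a = -b - c) (h2 : a' = -b' - c') :
    Φ a b' = Φ a' b := by
  have hbb : Φ b b' = 0 := hB b hb b' hb'
  have hb'b : Φ b' b = 0 := hB b' hb' b hb
  -- `Φ a a' = 0` with `a = -(b + c)`, `a' = -(b' + c')` links the two cross terms.
  have hcross : Φ b c' + Φ c b' = 0 := by
    rw [← Φ.apply_add_add_of_apply_eq_zero hbb (hC c hc c' hc'), ← hA a ha a' ha', h1, h2]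
    simp only [← neg_add', map_neg, LinearMap.neg_apply, neg_neg]
  calc Φ a b' = -Φ c b' := by simp [h1, hbb]
    _ = -Φ c' b := by rw [hskew c' b]; linarith
    _ = Φ a' b := by simp [h2, hb'b]

/-- If Φ is skew-symmetric, then Wall's induced pairing
Ψ([a],[a']) = Φ(a,b') (where a' = -b' - c', b' ∈ B, c' ∈ C) is symmetric:
at the level of representatives, Φ(a,b') = Φ(a',b). -/
theorem wall_pairing_symmetric {V : Type} [AddCommGroup V] [Module ℚ V]
    [FiniteDimensional ℚ V]
    (Φ : V →ₗ[ℚ] V →ₗ[ℚ] ℚ)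
    (hskew : ∀ x y, Φ x y = -(Φ y x))
    (A B C : Submodule ℚ V)
    (hA : ∀ x ∈ A, ∀ y ∈ A, Φ x y = 0)
    (hB : ∀ x ∈ B, ∀ y ∈ B, Φ x y = 0)
    (hC : ∀ x ∈ C, ∀ y ∈ C, Φ x y = 0)
    (a a' b b' c c' : V)
    (ha : a ∈ A) (ha' : a' ∈ A) (hb : b ∈ B) (hb' : b' ∈ B) (hc : c ∈ C) (hc' : c' ∈ C)
    (h1 : a = -b - c) (h2 : a' = -b' - c') :
    Φ a b' = Φ a' b :=
  wall_pairing_symmetric_general Φ hskew A B C hA hB hC a a' b b' c c' ha ha' hb hb' hc hc' h1 h2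
end

section
/- Let V be a finite-dimensional ℚ-vector space with bilinear Φ vanishing identically on subspaces A, B, C. Then the natural map sending a class of a ∈ A ∩ (B+C) with a = -b - c to the class of b ∈ B ∩ (C+A) induces a well-defined linear isomorphism (A ∩ (B + C))/(A ∩ B + A ∩ C) ≅ (B ∩ (C + A))/(B ∩ C + B ∩ A). -/
/-!
Both quotients are quotients of the space of triples `(a, b, c) ∈ A × B × C` with
`a + b + c = 0`, through the projections to `A` and to `B`, which map it onto `A ⊓ (B ⊔ C)` and
`B ⊓ (C ⊔ A)`. A triple is killed by one map iff it is killed by the other: if `a = u + v` with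
`u ∈ A ⊓ B`, `v ∈ A ⊓ C`, then `b = (b + u) - u` with `b + u = -(v + c) ∈ B ⊓ C`.
-/

open Function LinearMap Submodule

theorem LinearMap.exists_linearEquiv_apply_eq_of_ker_eq {R M P Q : Type*} [Ring R]
    [AddCommGroup M] [AddCommGroup P] [AddCommGroup Q] [Module R M] [Module R P] [Module R Q]
    (f : M →ₗ[R] P) (g : M →ₗ[R] Q) (hf : Surjective f) (hg : Surjective g)
    (h : ker f = ker g) : ∃ e : P ≃ₗ[R] Q, ∀ x, e (f x) = g x :=
  ⟨(f.quotKerEquivOfSurjective hf).symm ≪≫ₗ quotEquivOfEq _ _ h ≪≫ₗ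
    g.quotKerEquivOfSurjective hg, fun x => by simp⟩

namespace Submodule

variable {R V : Type*} [Ring R] [AddCommGroup V] [Module R V] (A B C : Submodule R V)

abbrev infSupQuotient : Type _ :=
  ↥(A ⊓ (B ⊔ C)) ⧸ comap (A ⊓ (B ⊔ C)).subtype (A ⊓ B ⊔ A ⊓ C)

variable {A B C}

theorem exists_add_add_eq_zero_of_mem_sup {a : V} (ha : a ∈ B ⊔ C) :
    ∃ b ∈ B, ∃ c ∈ C, a + b + c = 0 := by
  obtain ⟨b, hb, c, hc, rfl⟩ := mem_sup.mp ha
  exact ⟨-b, neg_mem hb, -c, neg_mem hc, by abel⟩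

theorem mem_inf_sup_inf_of_add_add_eq_zero {a b c : V} (ha : a ∈ A ⊓ B ⊔ A ⊓ C) (hb : b ∈ B)
    (hc : c ∈ C) (habc : a + b + c = 0) : b ∈ B ⊓ C ⊔ B ⊓ A := by
  obtain ⟨u, hu, v, hv, rfl⟩ := mem_sup.mp ha
  have hbu : b + u = -(v + c) := by rw [← sub_eq_zero, ← habc]; abel
  have hbuC : b + u ∈ C := hbu ▸ neg_mem (add_mem hv.2 hc)
  exact mem_sup.mpr ⟨b + u, ⟨add_mem hb hu.2, hbuC⟩, -u, ⟨neg_mem hu.2, neg_mem hu.1⟩, by abel⟩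

variable (A B C)

/-- `(a, b)` stands for the triple `(a, b, -(a + b)) ∈ A × B × C`. -/
def zeroSumPairs : Submodule R (V × V) :=
  A.prod B ⊓ C.comap (LinearMap.fst R V V + LinearMap.snd R V V)

variable {A B C}

theorem mem_zeroSumPairs {x : V × V} :
    x ∈ zeroSumPairs A B C ↔ x.1 ∈ A ∧ x.2 ∈ B ∧ x.1 + x.2 ∈ C := by
  simp [zeroSumPairs, and_assoc]

theorem mk_mem_zeroSumPairs {a b c : V} (ha : a ∈ A) (hb : b ∈ B) (hc : c ∈ C)
    (habc : a + b + c = 0) : (a, b) ∈ zeroSumPairs A B C :=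
  mem_zeroSumPairs.mpr ⟨ha, hb, by rw [eq_neg_of_add_eq_zero_left habc]; exact neg_mem hc⟩

theorem fst_mem_inf_sup {x : V × V} (hx : x ∈ zeroSumPairs A B C) : x.1 ∈ A ⊓ (B ⊔ C) := by
  obtain ⟨ha, hb, hab⟩ := mem_zeroSumPairs.mp hx
  exact ⟨ha, mem_sup.mpr ⟨-x.2, neg_mem hb, x.1 + x.2, hab, by abel⟩⟩

theorem snd_mem_inf_sup {x : V × V} (hx : x ∈ zeroSumPairs A B C) : x.2 ∈ B ⊓ (C ⊔ A) := by
  obtain ⟨ha, hb, hab⟩ := mem_zeroSumPairs.mp hx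
  exact ⟨hb, mem_sup.mpr ⟨x.1 + x.2, hab, -x.1, neg_mem ha, by abel⟩⟩

variable (A B C)

def zeroSumPairs.toInfSupQuotientFst : zeroSumPairs A B C →ₗ[R] infSupQuotient A B C :=
  (mkQ _).comp ((LinearMap.fst R V V).restrict fun _ => fst_mem_inf_sup)

def zeroSumPairs.toInfSupQuotientSnd : zeroSumPairs A B C →ₗ[R] infSupQuotient B C A :=
  (mkQ _).comp ((LinearMap.snd R V V).restrict fun _ => snd_mem_inf_sup)

variable {A B C}

namespace zeroSumPairs

theorem toInfSupQuotientFst_apply (x : zeroSumPairs A B C) :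
    toInfSupQuotientFst A B C x = Quotient.mk ⟨(x : V × V).1, fst_mem_inf_sup x.2⟩ :=
  rfl

theorem toInfSupQuotientSnd_apply (x : zeroSumPairs A B C) :
    toInfSupQuotientSnd A B C x = Quotient.mk ⟨(x : V × V).2, snd_mem_inf_sup x.2⟩ :=
  rfl

theorem mem_ker_toInfSupQuotientFst {x : zeroSumPairs A B C} :
    x ∈ ker (toInfSupQuotientFst A B C) ↔ (x : V × V).1 ∈ A ⊓ B ⊔ A ⊓ C := by
  rw [mem_ker, toInfSupQuotientFst_apply, Quotient.mk_eq_zero, mem_comap]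
  rfl

theorem mem_ker_toInfSupQuotientSnd {x : zeroSumPairs A B C} :
    x ∈ ker (toInfSupQuotientSnd A B C) ↔ (x : V × V).2 ∈ B ⊓ C ⊔ B ⊓ A := by
  rw [mem_ker, toInfSupQuotientSnd_apply, Quotient.mk_eq_zero, mem_comap]
  rfl

theorem ker_toInfSupQuotientFst_eq_ker_toInfSupQuotientSnd :
    ker (toInfSupQuotientFst A B C) = ker (toInfSupQuotientSnd A B C) := by
  ext ⟨⟨a, b⟩, hx⟩
  obtain ⟨ha, hb, hab⟩ := mem_zeroSumPairs.mp hx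
  rw [mem_ker_toInfSupQuotientFst, mem_ker_toInfSupQuotientSnd]
  constructor
  · intro h
    exact mem_inf_sup_inf_of_add_add_eq_zero h hb (neg_mem hab) (by abel)
  · intro h
    rw [sup_comm] at h ⊢
    exact mem_inf_sup_inf_of_add_add_eq_zero h ha (neg_mem hab) (by abel)

theorem surjective_toInfSupQuotientFst : Surjective (toInfSupQuotientFst A B C) := by
  intro q
  obtain ⟨⟨a, ha⟩, rfl⟩ := Quotient.mk_surjective _ q
  obtain ⟨b, hb, c, hc, habc⟩ := exists_add_add_eq_zero_of_mem_sup ha.2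
  exact ⟨⟨(a, b), mk_mem_zeroSumPairs ha.1 hb hc habc⟩, rfl⟩

theorem surjective_toInfSupQuotientSnd : Surjective (toInfSupQuotientSnd A B C) := by
  intro q
  obtain ⟨⟨b, hb⟩, rfl⟩ := Quotient.mk_surjective _ q
  obtain ⟨c, hc, a, ha, hbca⟩ := exists_add_add_eq_zero_of_mem_sup hb.2
  exact ⟨⟨(a, b), mk_mem_zeroSumPairs ha hb.1 hc (by rw [← hbca]; abel)⟩, rfl⟩

end zeroSumPairs

end Submodule

theorem wall_quotient_iso_general {V : Type} [AddCommGroup V] [Module ℚ V]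
    (A B C : Submodule ℚ V) :
    ∃ e : (↥(A ⊓ (B ⊔ C)) ⧸ (Submodule.comap (A ⊓ (B ⊔ C)).subtype (A ⊓ B ⊔ A ⊓ C)))
        ≃ₗ[ℚ] (↥(B ⊓ (C ⊔ A)) ⧸ (Submodule.comap (B ⊓ (C ⊔ A)).subtype (B ⊓ C ⊔ B ⊓ A))),
      ∀ (a b c : V) (_ : a ∈ A) (_ : b ∈ B) (_ : c ∈ C) (_ : a = -b - c)
        (hma : a ∈ A ⊓ (B ⊔ C)) (hmb : b ∈ B ⊓ (C ⊔ A)),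
        e (Submodule.Quotient.mk ⟨a, hma⟩) = Submodule.Quotient.mk ⟨b, hmb⟩ := by
  obtain ⟨e, he⟩ := exists_linearEquiv_apply_eq_of_ker_eq
    (zeroSumPairs.toInfSupQuotientFst A B C) (zeroSumPairs.toInfSupQuotientSnd A B C)
    zeroSumPairs.surjective_toInfSupQuotientFst zeroSumPairs.surjective_toInfSupQuotientSnd
    zeroSumPairs.ker_toInfSupQuotientFst_eq_ker_toInfSupQuotientSnd
  refine ⟨e, fun a b c ha hb hc habc _ _ => he ⟨(a, b), mk_mem_zeroSumPairs ha hb hc ?_⟩⟩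
  rw [habc]
  abel

/-- The map sending the class of a ∈ A ∩ (B+C), a = -b - c with b ∈ B, c ∈ C,
to the class of b, induces a well-defined linear isomorphism
(A ∩ (B + C))/(A ∩ B + A ∩ C) ≅ (B ∩ (C + A))/(B ∩ C + B ∩ A). -/
theorem wall_quotient_iso {V : Type} [AddCommGroup V] [Module ℚ V] [FiniteDimensional ℚ V]
    (A B C : Submodule ℚ V) :
    ∃ e : (↥(A ⊓ (B ⊔ C)) ⧸ (Submodule.comap (A ⊓ (B ⊔ C)).subtype (A ⊓ B ⊔ A ⊓ C)))
        ≃ₗ[ℚ] (↥(B ⊓ (C ⊔ A)) ⧸ (Submodule.comap (B ⊓ (C ⊔ A)).subtype (B ⊓ C ⊔ B ⊓ A))),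
      ∀ (a b c : V) (_ : a ∈ A) (_ : b ∈ B) (_ : c ∈ C) (_ : a = -b - c)
        (hma : a ∈ A ⊓ (B ⊔ C)) (hmb : b ∈ B ⊓ (C ⊔ A)),
        e (Submodule.Quotient.mk ⟨a, hma⟩) = Submodule.Quotient.mk ⟨b, hmb⟩ :=
  wall_quotient_iso_general A B C
end

section
/- Let (K, ⟨·,·⟩) be a finite-dimensional real vector space with a nondegenerate symmetric bilinear form, S ⊆ K a subspace with S ⊆ S^⊥, L a complement of S in S^⊥, and M a complement of S^⊥ in K. Then the signature of the form on K equals the signature of its restriction to L. -/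
/-! The form is nondegenerate on `L`: an element of `L` orthogonal to `L` is orthogonal to
`L ⊔ S = Sᗮ`, hence lies in `Sᗮᗮ = S`, hence vanishes. So on `K` and on `L` the positive and
negative indices `p`, `n` add up to the dimension (they are Mathlib's `sigPos` and `sigNeg` of
the associated quadratic form, and the radical is trivial). A maximal negative definite subspace
of `L` together with the isotropic `S ⊆ Lᗮ` spans a negative semidefinite subspace of `K`, so
`p(K) ≤ dim K - n(L) - dim S = p(L) + dim S`, and symmetrically `n(K) ≤ n(L) + dim S`. As
`dim K = dim L + 2 dim S`, both are equalities and `dim S` cancels in the signature. -/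

open LinearMap (BilinForm)

/-- The dimension of a maximal positive definite subspace for a bilinear form. -/
noncomputable def posIndex {V : Type} [AddCommGroup V] [Module ℝ V]
    (Φ : BilinForm ℝ V) : ℕ :=
  sSup {n | ∃ U : Submodule ℝ V, Module.finrank ℝ U = n ∧ ∀ v ∈ U, v ≠ 0 → 0 < Φ v v}

/-- The signature of a bilinear form. -/
noncomputable def signature {V : Type} [AddCommGroup V] [Module ℝ V]
    (Φ : BilinForm ℝ V) : ℤ :=
  (posIndex Φ : ℤ) - (posIndex (-Φ) : ℤ)

open Module Submodule LinearMap.BilinForm QuadraticForm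

namespace LinearMap.BilinForm

variable {𝕜 V : Type*} [Field 𝕜] [AddCommGroup V] [Module 𝕜 V]

lemma orthogonal_neg (Φ : BilinForm 𝕜 V) (S : Submodule 𝕜 V) :
    (-Φ).orthogonal S = Φ.orthogonal S := by
  ext; simp [mem_orthogonal_iff]

lemma restrict_neg (Φ : BilinForm 𝕜 V) (L : Submodule 𝕜 V) :
    (-Φ).restrict L = -Φ.restrict L :=
  rfl

variable [FiniteDimensional 𝕜 V] {Φ : BilinForm 𝕜 V} {S L : Submodule 𝕜 V}

lemma finrank_add_two_mul_finrank_eq_of_sup_eq_orthogonal (hnd : Φ.Nondegenerate)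
    (hsup : L ⊔ S = Φ.orthogonal S) (hinf : L ⊓ S = ⊥) :
    finrank 𝕜 L + 2 * finrank 𝕜 S = finrank 𝕜 V := by
  have hperp := finrank_orthogonal hnd S
  have hLS := Submodule.finrank_sup_add_finrank_inf_eq L S
  rw [hsup, hinf, finrank_bot] at hLS
  have := S.finrank_le
  omega

lemma nondegenerate_restrict_of_sup_eq_orthogonal (hnd : Φ.Nondegenerate) (hrefl : Φ.IsRefl)
    (hsup : L ⊔ S = Φ.orthogonal S) (hinf : L ⊓ S = ⊥) : (Φ.restrict L).Nondegenerate := by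
  refine nondegenerate_restrict_of_disjoint_orthogonal Φ hrefl (disjoint_iff_inf_le.mpr ?_)
  rw [← hinf]
  intro x hx
  obtain ⟨hxL, hxL'⟩ := mem_inf.mp hx
  refine mem_inf.mpr ⟨hxL, ?_⟩
  rw [← orthogonal_orthogonal hnd hrefl S, ← hsup, mem_orthogonal_iff]
  intro w hw
  obtain ⟨l, hl, s, hs, rfl⟩ := mem_sup.mp hw
  have hsx : Φ s x = 0 := (hsup ▸ mem_sup_left hxL : x ∈ Φ.orthogonal S) s hs
  rw [map_add, LinearMap.add_apply, hxL' l hl, hsx, add_zero]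

end LinearMap.BilinForm

variable {V : Type} [AddCommGroup V] [Module ℝ V]

lemma posDef_restrict_toQuadraticMap_iff (Φ : BilinForm ℝ V) (U : Submodule ℝ V) :
    (Φ.toQuadraticMap.restrict U).PosDef ↔ ∀ v ∈ U, v ≠ 0 → 0 < Φ v v := by
  simp [QuadraticMap.PosDef]

variable [FiniteDimensional ℝ V]

lemma posIndex_eq_sigPos (Φ : BilinForm ℝ V) : posIndex Φ = sigPos Φ.toQuadraticMap := by
  simp_rw [posIndex, ← posDef_restrict_toQuadraticMap_iff]
  exact (sigPos_isGreatest _).csSup_eq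

lemma posIndex_neg_eq_sigNeg (Φ : BilinForm ℝ V) : posIndex (-Φ) = sigNeg Φ.toQuadraticMap := by
  rw [posIndex_eq_sigPos, LinearMap.BilinMap.toQuadraticMap_neg, sigPos_neg]

lemma exists_finrank_eq_posIndex (Φ : BilinForm ℝ V) :
    ∃ U : Submodule ℝ V, finrank ℝ U = posIndex Φ ∧ ∀ v ∈ U, v ≠ 0 → 0 < Φ v v := by
  simpa [posIndex_eq_sigPos, posDef_restrict_toQuadraticMap_iff] using
    exists_finrank_eq_sigPos_and_posDef Φ.toQuadraticMap

lemma posIndex_add_finrank_le (Φ : BilinForm ℝ V) {N : Submodule ℝ V}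
    (hN : ∀ v ∈ N, Φ v v ≤ 0) : posIndex Φ + finrank ℝ N ≤ finrank ℝ V :=
  posIndex_eq_sigPos Φ ▸ sigPos_add_finrank_le_of_nonpos hN

lemma posIndex_add_posIndex_neg_eq_finrank {Φ : BilinForm ℝ V} (hΦ : Φ.IsSymm)
    (hnd : Φ.Nondegenerate) : posIndex Φ + posIndex (-Φ) = finrank ℝ V := by
  have hrad : Φ.toQuadraticMap.radical = ⊥ := by
    rw [QuadraticMap.radical_eq_ker_associated, QuadraticMap.associated_left_inverse ℝ hΦ.eq]
    exact hnd.ker_eq_bot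
  have := sigPos_add_sigNeg_add_radical (Q := Φ.toQuadraticMap)
  rwa [hrad, finrank_bot, add_zero, ← posIndex_eq_sigPos, ← posIndex_neg_eq_sigNeg] at this

lemma posIndex_add_posIndex_neg_restrict_add_finrank_le {Φ : BilinForm ℝ V} (hrefl : Φ.IsRefl)
    {S L : Submodule ℝ V} (hS : S ≤ Φ.orthogonal S) (hL : L ≤ Φ.orthogonal S)
    (hinf : L ⊓ S = ⊥) :
    posIndex Φ + posIndex (-Φ.restrict L) + finrank ℝ S ≤ finrank ℝ V := by
  obtain ⟨U, hU, hUneg⟩ := exists_finrank_eq_posIndex (-Φ.restrict L)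
  have hnonpos : ∀ v ∈ U.map L.subtype ⊔ S, Φ v v ≤ 0 := by
    intro v hv
    obtain ⟨_, ⟨u, hu, rfl⟩, s, hs, rfl⟩ := mem_sup.mp hv
    have hsu : Φ s u = 0 := hL u.2 s hs
    have hus : Φ u s = 0 := hrefl _ _ hsu
    have hss : Φ s s = 0 := hS hs s hs
    have huu : Φ u u ≤ 0 := by
      rcases eq_or_ne u 0 with rfl | hu0
      · simp
      · simpa using (hUneg u hu hu0).le
    simpa [hsu, hus, hss] using huu
  have hdisj : U.map L.subtype ⊓ S = ⊥ :=
    eq_bot_iff.mpr (hinf ▸ inf_le_inf_right S (map_subtype_le L U))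
  have hdim := finrank_sup_add_finrank_inf_eq (U.map L.subtype) S
  rw [hdisj, finrank_bot, add_zero, finrank_map_subtype_eq, hU] at hdim
  have := posIndex_add_finrank_le Φ hnonpos
  omega

theorem signature_eq_signature_restrict_complement_general
    {K : Type} [AddCommGroup K] [Module ℝ K] [FiniteDimensional ℝ K]
    (Φ : BilinForm ℝ K)
    (hsymm : ∀ x y, Φ x y = Φ y x)
    (hnd : Φ.Nondegenerate)
    (S L : Submodule ℝ K)
    (hS : S ≤ Φ.orthogonal S)
    (hLsup : L ⊔ S = Φ.orthogonal S)
    (hLinf : L ⊓ S = ⊥) :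
    signature Φ = signature (Φ.restrict L) := by
  have hΦ : Φ.IsSymm := ⟨hsymm⟩
  have hL : L ≤ Φ.orthogonal S := hLsup ▸ le_sup_left
  have hdim := finrank_add_two_mul_finrank_eq_of_sup_eq_orthogonal hnd hLsup hLinf
  have hK := posIndex_add_posIndex_neg_eq_finrank hΦ hnd
  have hKL := posIndex_add_posIndex_neg_eq_finrank (hΦ.restrict L)
    (nondegenerate_restrict_of_sup_eq_orthogonal hnd hΦ.isRefl hLsup hLinf)
  have hpos := posIndex_add_posIndex_neg_restrict_add_finrank_le hΦ.isRefl hS hL hLinf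
  have hneg := posIndex_add_posIndex_neg_restrict_add_finrank_le hΦ.isRefl.neg
    (orthogonal_neg Φ S ▸ hS) (orthogonal_neg Φ S ▸ hL) hLinf
  rw [restrict_neg, neg_neg (Φ.restrict L)] at hneg
  unfold signature
  omega

/-- For a nondegenerate symmetric bilinear form on a finite-dimensional real
vector space with S totally isotropic, S^⊥ = L ⊕ S and K = S^⊥ ⊕ M, the signature of the
form on K equals the signature of its restriction to L. -/
theorem signature_eq_signature_restrict_complement
    {K : Type} [AddCommGroup K] [Module ℝ K] [FiniteDimensional ℝ K]
    (Φ : BilinForm ℝ K)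
    (hsymm : ∀ x y, Φ x y = Φ y x)
    (hnd : Φ.Nondegenerate)
    (S L M : Submodule ℝ K)
    (hS : S ≤ Φ.orthogonal S)
    (hLsup : L ⊔ S = Φ.orthogonal S)
    (hLinf : L ⊓ S = ⊥)
    (hMsup : Φ.orthogonal S ⊔ M = ⊤)
    (hMinf : Φ.orthogonal S ⊓ M = ⊥) :
    signature Φ = signature (Φ.restrict L) :=
  signature_eq_signature_restrict_complement_general Φ hsymm hnd S L hS hLsup hLinf
end
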